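/- arXiv:2005.14620 — 7 statements merged into one kernel-verified Lean document; each statement's English description precedes it below -/
import Mathlib

section
/- Let G be a finite strongly connected directed graph and let u and u' be two distinct vertices of G such that N⁺_G(u) ⊆ N⁺_G(u') and N⁻_G(u) ⊆ N⁻_G(u') (out- and in-neighborhoods). Then the induced subgraph G[V(G) \ {u}] is strongly connected. -/
/-! Sending `u` to `u'` and fixing every other vertex maps each arc of `G` to an arc of
`G - u`, since `u'` has all the in- and out-neighbours of `u` (a loop at `u` gives `u' → u`,
hence a loop at `u'`). A surjective arc-preserving map carries directed paths
along, so `G - u` inherits strong connectivity from `G`. -/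

/-- A directed graph (given by its arc relation) is strongly connected if every
vertex can reach every other vertex by a directed path. -/
def StronglyConnected {V : Type*} (A : V → V → Prop) : Prop :=
  ∀ u v : V, Relation.ReflTransGen A u v

theorem StronglyConnected.of_surjective {V W : Type*} {A : V → V → Prop} {B : W → W → Prop}
    (hA : StronglyConnected A) (f : V → W) (hf : Function.Surjective f)
    (hmap : ∀ x y, A x y → B (f x) (f y)) : StronglyConnected B := by
  intro a b
  obtain ⟨x, rfl⟩ := hf a
  obtain ⟨y, rfl⟩ := hf b
  exact (hA x y).lift f hmap

section MergeVertex

variable {V : Type*} [DecidableEq V] {u u' : V}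

def mergeVertex (hne : u ≠ u') (x : V) : {x : V // x ≠ u} :=
  if hx : x = u then ⟨u', hne.symm⟩ else ⟨x, hx⟩

theorem mergeVertex_self (hne : u ≠ u') : mergeVertex hne u = ⟨u', hne.symm⟩ :=
  dif_pos rfl

theorem mergeVertex_of_ne (hne : u ≠ u') {x : V} (hx : x ≠ u) :
    mergeVertex hne x = ⟨x, hx⟩ :=
  dif_neg hx

theorem mergeVertex_surjective (hne : u ≠ u') : Function.Surjective (mergeVertex hne) :=
  fun a => ⟨a.1, mergeVertex_of_ne hne a.2⟩

theorem mergeVertex_map_arc {A : V → V → Prop} (hne : u ≠ u')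
    (hout : ∀ x, A u x → A u' x) (hin : ∀ x, A x u → A x u') {x y : V} (h : A x y) :
    A (mergeVertex hne x).1 (mergeVertex hne y).1 := by
  by_cases hx : x = u <;> by_cases hy : y = u
  · subst x y
    simpa only [mergeVertex_self] using hin u' (hout u h)
  · subst x
    simpa only [mergeVertex_self, mergeVertex_of_ne hne hy] using hout y h
  · subst y
    simpa only [mergeVertex_self, mergeVertex_of_ne hne hx] using hin x h
  · simpa only [mergeVertex_of_ne hne hx, mergeVertex_of_ne hne hy] using h

end MergeVertex

theorem removing_dominated_vertex_keeps_strong_connectivity_general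
    {V : Type*} (A : V → V → Prop)
    (hG : StronglyConnected A) (u u' : V) (hne : u ≠ u')
    (hout : ∀ x, A u x → A u' x) (hin : ∀ x, A x u → A x u') :
    StronglyConnected (fun a b : {x : V // x ≠ u} => A a.1 b.1) := by
  classical
  exact hG.of_surjective (mergeVertex hne) (mergeVertex_surjective hne)
    fun _ _ => mergeVertex_map_arc hne hout hin

/-- If `G` is a finite strongly connected digraph and `u ≠ u'` are vertices with
`N⁺(u) ⊆ N⁺(u')` and `N⁻(u) ⊆ N⁻(u')`, then the induced subgraph on
`V(G) \ {u}` is strongly connected. -/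
theorem removing_dominated_vertex_keeps_strong_connectivity
    {V : Type*} [Fintype V] [DecidableEq V] (A : V → V → Prop)
    (hG : StronglyConnected A) (u u' : V) (hne : u ≠ u')
    (hout : ∀ x, A u x → A u' x) (hin : ∀ x, A x u → A x u') :
    StronglyConnected (fun a b : {x : V // x ≠ u} => A a.1 b.1) :=
  removing_dominated_vertex_keeps_strong_connectivity_general A hG u u' hne hout hin
end

section
/- Let I=(G,w) be a MinPAC instance with |V(G)| ≥ 2, let v ∈ V(G), and let δ_v := min_{vu ∈ A(G)} w(vu). Let w' be the weight function with w'(vu) = w(vu) − δ_v for every outgoing arc vu of v, and w'(e) = w(e) for every other arc e. Then opt((G,w)) = opt((G,w')) + δ_v. -/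
open scoped Classical in
/-- The cost paid by a vertex `v` in the subgraph with arcs `B`:
the maximum weight of an outgoing arc of `v` (0 if there is none). -/
noncomputable def vertexCost {V : Type*} [Fintype V] (B : V → V → Prop)
    (w : V → V → ℕ) (v : V) : ℕ :=
  Finset.univ.sup fun u => if B v u then w v u else 0

/-- The total cost of the subgraph with arcs `B`. -/
noncomputable def pacCost {V : Type*} [Fintype V] (B : V → V → Prop)
    (w : V → V → ℕ) : ℕ :=
  ∑ v, vertexCost B w v

/-- A solution of a MinPAC instance `(A, w)`: a strongly connected spanning
subgraph (given by its arc relation `B`). -/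
def IsPACSolution {V : Type*} (A B : V → V → Prop) : Prop :=
  (∀ x y, B x y → A x y) ∧ StronglyConnected B

/-- The optimal cost of a MinPAC instance. -/
noncomputable def pacOpt {V : Type*} [Fintype V] (A : V → V → Prop)
    (w : V → V → ℕ) : ℕ :=
  sInf { c | ∃ B : V → V → Prop, IsPACSolution A B ∧ pacCost B w = c }

/-!
In a strongly connected spanning subgraph on at least two vertices, `v` has an outgoing arc,
and every outgoing arc of `v` weighs at least `δ_v`. So lowering these weights by `δ_v`
lowers the cost paid by `v` by exactly `δ_v` and leaves the cost of every other vertex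
unchanged: the cost of every solution, hence the optimum, drops by exactly `δ_v`.
-/

open Finset

section

variable {V : Type*}

theorem StronglyConnected.exists_adj [Nontrivial V] {B : V → V → Prop}
    (hB : StronglyConnected B) (v : V) : ∃ u, B v u := by
  obtain ⟨u, hu⟩ := exists_ne v
  obtain h | ⟨c, hc, -⟩ := (hB v u).cases_head
  · exact absurd h.symm hu
  · exact ⟨c, hc⟩

variable [Fintype V]

open scoped Classical in
theorem vertexCost_eq_sup_filter (B : V → V → Prop) (w : V → V → ℕ) (v : V) :
    vertexCost B w v = (univ.filter (B v)).sup (w v) := by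
  rw [vertexCost, sup_ite]
  simp

theorem vertexCost_congr {B : V → V → Prop} {w w' : V → V → ℕ} {x : V}
    (h : ∀ u, w x u = w' x u) : vertexCost B w x = vertexCost B w' x := by
  simp only [vertexCost, h]

theorem vertexCost_add_of_eq_tsub {B : V → V → Prop} {w w' : V → V → ℕ} {v : V} {δ : ℕ}
    (hw' : ∀ u, w' v u = w v u - δ) (hne : ∃ u, B v u) (hle : ∀ u, B v u → δ ≤ w v u) :
    vertexCost B w' v + δ = vertexCost B w v := by
  classical
  obtain ⟨u, hu⟩ := hne
  have hs : (univ.filter (B v)).Nonempty := ⟨u, by simpa using hu⟩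
  rw [vertexCost_eq_sup_filter, vertexCost_eq_sup_filter,
    apply_sup_eq_sup_comp_of_nonempty (g := (· + δ)) add_left_mono hs]
  refine sup_congr rfl fun u hu => ?_
  simp only [Function.comp_apply, hw', Nat.sub_add_cancel (hle u (mem_filter.mp hu).2)]

variable {A : V → V → Prop}

theorem pacOpt_le {B : V → V → Prop} (hB : IsPACSolution A B) (w : V → V → ℕ) :
    pacOpt A w ≤ pacCost B w :=
  Nat.sInf_le ⟨B, hB, rfl⟩

theorem StronglyConnected.exists_pacCost_eq_pacOpt (hA : StronglyConnected A)
    (w : V → V → ℕ) : ∃ B, IsPACSolution A B ∧ pacCost B w = pacOpt A w :=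
  Nat.sInf_mem (s := {c | ∃ B, IsPACSolution A B ∧ pacCost B w = c})
    ⟨_, A, ⟨fun _ _ h => h, hA⟩, rfl⟩

theorem pacOpt_eq_add_of_forall_pacCost (hA : StronglyConnected A) {w w' : V → V → ℕ} {δ : ℕ}
    (h : ∀ B, IsPACSolution A B → pacCost B w = pacCost B w' + δ) :
    pacOpt A w = pacOpt A w' + δ := by
  obtain ⟨B, hB, hBw⟩ := hA.exists_pacCost_eq_pacOpt w
  obtain ⟨B', hB', hB'w'⟩ := hA.exists_pacCost_eq_pacOpt w'
  apply le_antisymm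
  · calc pacOpt A w ≤ pacCost B' w := pacOpt_le hB' w
      _ = pacOpt A w' + δ := by rw [h B' hB', hB'w']
  · calc pacOpt A w' + δ ≤ pacCost B w' + δ := by gcongr; exact pacOpt_le hB w'
      _ = pacOpt A w := by rw [← h B hB, hBw]

variable [DecidableEq V]

def reduceOutWeights (w : V → V → ℕ) (v : V) (δ : ℕ) : V → V → ℕ :=
  fun x y => if x = v then w x y - δ else w x y

theorem pacCost_eq_pacCost_reduceOutWeights_add {B : V → V → Prop} {w : V → V → ℕ} {v : V}
    {δ : ℕ} (hne : ∃ u, B v u) (hle : ∀ u, B v u → δ ≤ w v u) :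
    pacCost B w = pacCost B (reduceOutWeights w v δ) + δ := by
  have hv : vertexCost B (reduceOutWeights w v δ) v + δ = vertexCost B w v :=
    vertexCost_add_of_eq_tsub (fun u => if_pos rfl) hne hle
  have hx : ∀ x ∈ univ.erase v, vertexCost B w x = vertexCost B (reduceOutWeights w v δ) x :=
    fun x hx => vertexCost_congr fun u => (if_neg (ne_of_mem_erase hx)).symm
  rw [pacCost, pacCost, ← add_sum_erase _ _ (mem_univ v), ← add_sum_erase _ _ (mem_univ v),
    ← hv, sum_congr rfl hx]
  ring

end

/-- Let `(G, w)` be a MinPAC instance with at least two vertices, `v` a vertex, and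
`δ_v = min_{vu ∈ A(G)} w(vu)`. Reducing the weight of every outgoing arc of `v` by
`δ_v` (and keeping all other weights) decreases the optimal cost by exactly `δ_v`. -/
theorem opt_eq_of_reducing_outgoing_weights
    {V : Type*} [Fintype V] [DecidableEq V] (A : V → V → Prop) (w : V → V → ℕ)
    (hG : StronglyConnected A) (hcard : 2 ≤ Fintype.card V)
    (v : V) (δ : ℕ) (hδ : δ = sInf {c | ∃ u, A v u ∧ w v u = c}) :
    pacOpt A w = pacOpt A (fun x y => if x = v then w x y - δ else w x y) + δ := by
  have : Nontrivial V := Fintype.one_lt_card_iff_nontrivial.mp hcard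
  have hδle : ∀ u, A v u → δ ≤ w v u := fun u hu => hδ ▸ Nat.sInf_le ⟨u, hu, rfl⟩
  refine pacOpt_eq_add_of_forall_pacCost hG fun B hB => ?_
  exact pacCost_eq_pacCost_reduceOutWeights_add (hB.2.exists_adj v)
    fun u hu => hδle u (hB.1 v u hu)
end

section
/- Let G be a finite strongly connected directed graph, let H be a strongly connected spanning subgraph of G, and let P = (v_0, v_1, …, v_h, v_{h+1}) with h ≥ 2 be a maximal induced path of G. Then at least one of the following four cases holds: (R) v_i v_{i+1} ∈ A(H) for every i ∈ [h−1], and v_{k+1} v_k ∉ A(H) for some k ∈ [h−1]; (L) v_{i+1} v_i ∈ A(H) for every i ∈ [h−1], and v_k v_{k+1} ∉ A(H) for some k ∈ [h−1]; (B) v_i v_{i+1} ∈ A(H) and v_{i+1} v_i ∈ A(H) for every i ∈ [h−1]; (N) there exists k ∈ [h−1] with v_k v_{k+1} ∉ A(H) and v_{k+1} v_k ∉ A(H), and for every i ∈ [h−1] with i ≠ k both v_i v_{i+1} ∈ A(H) and v_{i+1} v_i ∈ A(H). -/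
open scoped Classical in
/-- The degree of a vertex in the underlying undirected graph of the digraph with
arc relation `A`. -/
noncomputable def underlyingDegree {V : Type*} [Fintype V] (A : V → V → Prop)
    (x : V) : ℕ :=
  (Finset.univ.filter fun y => y ≠ x ∧ (A x y ∨ A y x)).card

/-! An inner vertex `v_i` of the path has degree 2, so its only neighbours are `v_{i-1}` and
`v_{i+1}`; hence a segment `v_{a+1}, …, v_b` of inner vertices can be left or entered only
through its two end arcs, and strong connectivity forces `H` to do both. If the arc
`v_k v_{k+1}` is missing from `H`, cutting the path at `k` shows that every backward arc
`v_{j+1} v_j` with `j ≠ k` is present, and symmetrically; the four cases are a bookkeeping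
consequence. -/

lemma Relation.ReflTransGen.exists_arc_of_mem_of_notMem {V : Type*} {R : V → V → Prop}
    {S : Set V} {u v : V} (huv : Relation.ReflTransGen R u v) (hu : u ∈ S) (hv : v ∉ S) :
    ∃ x y, x ∈ S ∧ y ∉ S ∧ R x y := by
  induction huv with
  | refl => exact absurd hu hv
  | @tail w _ _ hwv ih =>
    by_cases hw : w ∈ S
    · exact ⟨w, _, hw, hv, hwv⟩
    · exact ih hw

lemma StronglyConnected.swap {V : Type*} {R : V → V → Prop} (hR : StronglyConnected R) :
    StronglyConnected (Function.swap R) := fun u v =>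
  Relation.reflTransGen_swap.mpr (hR v u)

lemma eq_or_eq_of_underlyingDegree_eq_two {V : Type*} [Fintype V] {A : V → V → Prop}
    {x a b y : V} (hx : underlyingDegree A x = 2) (hab : a ≠ b) (hax : a ≠ x) (hbx : b ≠ x)
    (ha : A x a ∨ A a x) (hb : A x b ∨ A b x) (hyx : y ≠ x) (hy : A x y ∨ A y x) :
    y = a ∨ y = b := by
  classical
  have hnbrs : (Finset.univ.filter fun z => z ≠ x ∧ (A x z ∨ A z x)) = {a, b} := by
    refine (Finset.eq_of_subset_of_card_le ?_ ?_).symm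
    · simp only [Finset.insert_subset_iff, Finset.singleton_subset_iff, Finset.mem_filter,
        Finset.mem_univ, true_and]
      exact ⟨⟨hax, ha⟩, hbx, hb⟩
    · rw [Finset.card_pair hab]
      exact hx.le
  have hmem : y ∈ Finset.univ.filter fun z => z ≠ x ∧ (A x z ∨ A z x) := by
    simpa using ⟨hyx, hy⟩
  simpa [hnbrs] using hmem

lemma four_cases_of_not_imp {F G : ℕ → Prop} {m n : ℕ}
    (hF : ∀ k j, m ≤ k → k ≤ n → m ≤ j → j ≤ n → j ≠ k → ¬ F k → G j)
    (hG : ∀ k j, m ≤ k → k ≤ n → m ≤ j → j ≤ n → j ≠ k → ¬ G k → F j) :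
    ((∀ i, m ≤ i → i ≤ n → F i) ∧ ∃ k, m ≤ k ∧ k ≤ n ∧ ¬ G k) ∨
    ((∀ i, m ≤ i → i ≤ n → G i) ∧ ∃ k, m ≤ k ∧ k ≤ n ∧ ¬ F k) ∨
    (∀ i, m ≤ i → i ≤ n → F i ∧ G i) ∨
    (∃ k, m ≤ k ∧ k ≤ n ∧ ¬ F k ∧ ¬ G k ∧ ∀ i, m ≤ i → i ≤ n → i ≠ k → F i ∧ G i) := by
  by_cases hboth : ∃ k, m ≤ k ∧ k ≤ n ∧ ¬ F k ∧ ¬ G k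
  · obtain ⟨k, hmk, hkn, hFk, hGk⟩ := hboth
    exact Or.inr <| Or.inr <| Or.inr ⟨k, hmk, hkn, hFk, hGk, fun i hmi hin hik =>
      ⟨hG k i hmk hkn hmi hin hik hGk, hF k i hmk hkn hmi hin hik hFk⟩⟩
  push Not at hboth
  by_cases hFall : ∀ i, m ≤ i → i ≤ n → F i
  · by_cases hGall : ∀ i, m ≤ i → i ≤ n → G i
    · exact Or.inr <| Or.inr <| Or.inl fun i hmi hin => ⟨hFall i hmi hin, hGall i hmi hin⟩
    · push Not at hGall
      exact Or.inl ⟨hFall, hGall⟩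
  · push Not at hFall
    obtain ⟨k, hmk, hkn, hFk⟩ := hFall
    refine Or.inr <| Or.inl ⟨fun j hmj hjn => ?_, k, hmk, hkn, hFk⟩
    obtain rfl | hjk := eq_or_ne j k
    · exact hboth j hmj hjn hFk
    · exact hF k j hmk hkn hmj hjn hjk hFk

section InnerArcs

variable {V : Type*} {R S : V → V → Prop} {h : ℕ} {p : ℕ → V}

def InnerArcsAlongPath (R : V → V → Prop) (h : ℕ) (p : ℕ → V) : Prop :=
  ∀ i, 1 ≤ i → i ≤ h → ∀ y, R (p i) y ∨ R y (p i) → y = p i ∨ y = p (i - 1) ∨ y = p (i + 1)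

lemma InnerArcsAlongPath.mono (hS : InnerArcsAlongPath S h p) (hRS : ∀ x y, R x y → S x y) :
    InnerArcsAlongPath R h p := fun i hi1 hih y hy =>
  hS i hi1 hih y (hy.imp (hRS _ _) (hRS _ _))

lemma InnerArcsAlongPath.swap (hR : InnerArcsAlongPath R h p) :
    InnerArcsAlongPath (Function.swap R) h p := fun i hi1 hih y hy =>
  hR i hi1 hih y hy.symm

lemma innerArcsAlongPath_of_underlyingDegree [Fintype V]
    (hinj : ∀ i j, i ≤ h + 1 → j ≤ h + 1 → p i = p j → i = j)
    (hpath : ∀ i ≤ h, R (p i) (p (i + 1)) ∨ R (p (i + 1)) (p i))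
    (hdeg : ∀ i, 1 ≤ i → i ≤ h → underlyingDegree R (p i) = 2) :
    InnerArcsAlongPath R h p := by
  intro i hi1 hih y hy
  have hne : ∀ j, j ≤ h + 1 → j ≠ i → p j ≠ p i := fun j hj hji hpj =>
    hji (hinj j i hj (by omega) hpj)
  have hprev : R (p i) (p (i - 1)) ∨ R (p (i - 1)) (p i) := by
    simpa [Nat.sub_add_cancel hi1] using (hpath (i - 1) (by omega)).symm
  obtain rfl | hyi := eq_or_ne y (p i)
  · exact Or.inl rfl
  · refine Or.inr (eq_or_eq_of_underlyingDegree_eq_two (hdeg i hi1 hih) ?_ (hne _ (by omega)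
      (by omega)) (hne _ (by omega) (by omega)) hprev (hpath i hih) hyi hy)
    exact fun he => absurd (hinj _ _ (by omega) (by omega) he) (by omega)

lemma exit_arc_of_segment (hR : StronglyConnected R) (harcs : InnerArcsAlongPath R h p)
    (hinj : ∀ i j, i ≤ h + 1 → j ≤ h + 1 → p i = p j → i = j)
    {a b : ℕ} (hab : a < b) (hbh : b ≤ h) :
    R (p (a + 1)) (p a) ∨ R (p b) (p (b + 1)) := by
  have hmem : ∀ j, a < j → j ≤ b → p j ∈ p '' Set.Ioc a b := fun j haj hjb =>
    Set.mem_image_of_mem p ⟨haj, hjb⟩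
  have hp0 : p 0 ∉ p '' Set.Ioc a b := by
    rintro ⟨i, ⟨hai, hib⟩, he⟩
    have := hinj i 0 (by omega) (by omega) he
    omega
  obtain ⟨_, y, ⟨i, ⟨hai, hib⟩, rfl⟩, hy, hiy⟩ :=
    (hR (p b) (p 0)).exists_arc_of_mem_of_notMem (hmem b hab le_rfl) hp0
  rcases harcs i (by omega) (by omega) y (Or.inl hiy) with rfl | rfl | rfl
  · exact absurd (hmem i hai hib) hy
  · obtain rfl | hia := eq_or_ne i (a + 1)
    · exact Or.inl hiy
    · exact absurd (hmem (i - 1) (by omega) (by omega)) hy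
  · obtain rfl | hib := eq_or_ne i b
    · exact Or.inr hiy
    · exact absurd (hmem (i + 1) (by omega) (by omega)) hy

lemma backward_arc_of_not_forward_arc (hR : StronglyConnected R)
    (harcs : InnerArcsAlongPath R h p)
    (hinj : ∀ i j, i ≤ h + 1 → j ≤ h + 1 → p i = p j → i = j)
    {j k : ℕ} (hjh : j ≤ h) (hkh : k ≤ h) (hjk : j ≠ k) (hk : ¬ R (p k) (p (k + 1))) :
    R (p (j + 1)) (p j) := by
  rcases hjk.lt_or_gt with hlt | hgt
  · exact (exit_arc_of_segment hR harcs hinj hlt hkh).resolve_right hk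
  · exact (exit_arc_of_segment hR.swap harcs.swap hinj hgt hjh).resolve_left hk

end InnerArcs

theorem maximal_induced_path_four_cases_general
    {V : Type*} [Fintype V] (A B : V → V → Prop)
    (hBA : ∀ x y, B x y → A x y) (hB : StronglyConnected B)
    (h : ℕ) (p : ℕ → V)
    (hinj : ∀ i j, i ≤ h + 1 → j ≤ h + 1 → p i = p j → i = j)
    (hpath : ∀ i ≤ h, A (p i) (p (i + 1)) ∨ A (p (i + 1)) (p i))
    (hdin : ∀ i, 1 ≤ i → i ≤ h → underlyingDegree A (p i) = 2) :
    -- Case (R)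
    ((∀ i, 1 ≤ i → i ≤ h - 1 → B (p i) (p (i + 1))) ∧
      ∃ k, 1 ≤ k ∧ k ≤ h - 1 ∧ ¬ B (p (k + 1)) (p k)) ∨
    -- Case (L)
    ((∀ i, 1 ≤ i → i ≤ h - 1 → B (p (i + 1)) (p i)) ∧
      ∃ k, 1 ≤ k ∧ k ≤ h - 1 ∧ ¬ B (p k) (p (k + 1))) ∨
    -- Case (B)
    (∀ i, 1 ≤ i → i ≤ h - 1 → B (p i) (p (i + 1)) ∧ B (p (i + 1)) (p i)) ∨
    -- Case (N)
    (∃ k, 1 ≤ k ∧ k ≤ h - 1 ∧ ¬ B (p k) (p (k + 1)) ∧ ¬ B (p (k + 1)) (p k) ∧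
      ∀ i, 1 ≤ i → i ≤ h - 1 → i ≠ k → B (p i) (p (i + 1)) ∧ B (p (i + 1)) (p i)) := by
  have hBarcs : InnerArcsAlongPath B h p :=
    (innerArcsAlongPath_of_underlyingDegree hinj hpath hdin).mono hBA
  refine four_cases_of_not_imp (fun k j _ hkh _ hjh hjk hk => ?_)
    (fun k j _ hkh _ hjh hjk hk => ?_)
  · exact backward_arc_of_not_forward_arc hB hBarcs hinj (by omega) (by omega) hjk hk
  · exact backward_arc_of_not_forward_arc hB.swap hBarcs.swap hinj (by omega) (by omega) hjk hk

/-- Let `G` be a finite strongly connected digraph, `H` a strongly connected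
spanning subgraph of `G`, and `P = (v_0, …, v_{h+1})`, `h ≥ 2`, a maximal induced
path of `G`. Then the connection of `v_1` and `v_h` inside `P` in `H` falls into
one of the four cases (R), (L), (B), (N). -/
theorem maximal_induced_path_four_cases
    {V : Type*} [Fintype V] (A B : V → V → Prop)
    (hG : StronglyConnected A)
    (hBA : ∀ x y, B x y → A x y) (hB : StronglyConnected B)
    (h : ℕ) (hh : 2 ≤ h) (p : ℕ → V)
    (hinj : ∀ i j, i ≤ h + 1 → j ≤ h + 1 → p i = p j → i = j)
    (hpath : ∀ i ≤ h, A (p i) (p (i + 1)) ∨ A (p (i + 1)) (p i))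
    (hd0 : 3 ≤ underlyingDegree A (p 0))
    (hdlast : 3 ≤ underlyingDegree A (p (h + 1)))
    (hdin : ∀ i, 1 ≤ i → i ≤ h → underlyingDegree A (p i) = 2) :
    -- Case (R)
    ((∀ i, 1 ≤ i → i ≤ h - 1 → B (p i) (p (i + 1))) ∧
      ∃ k, 1 ≤ k ∧ k ≤ h - 1 ∧ ¬ B (p (k + 1)) (p k)) ∨
    -- Case (L)
    ((∀ i, 1 ≤ i → i ≤ h - 1 → B (p (i + 1)) (p i)) ∧
      ∃ k, 1 ≤ k ∧ k ≤ h - 1 ∧ ¬ B (p k) (p (k + 1))) ∨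
    -- Case (B)
    (∀ i, 1 ≤ i → i ≤ h - 1 → B (p i) (p (i + 1)) ∧ B (p (i + 1)) (p i)) ∨
    -- Case (N)
    (∃ k, 1 ≤ k ∧ k ≤ h - 1 ∧ ¬ B (p k) (p (k + 1)) ∧ ¬ B (p (k + 1)) (p k) ∧
      ∀ i, 1 ≤ i → i ≤ h - 1 → i ≠ k → B (p i) (p (i + 1)) ∧ B (p (i + 1)) (p i)) :=
  maximal_induced_path_four_cases_general A B hBA hB h p hinj hpath hdin
end

section
/- Let P = (v_0, …, v_{h+1}) be a maximal induced path of a digraph G with extended arc weights w̄ : V×V → ℕ∪{∞} (w̄(xy) = w(xy) if xy ∈ A(G), else ∞), and let C_R, C_L, C_N and the path-gadget weights w(a_1 b_2), w(a_2 b_1) be defined as in the gadget construction. Then w(a_1 b_2) ≤ C_R, w(a_2 b_1) ≤ C_L, and w(a_1 b_2) + w(a_2 b_1) ≥ C_N. -/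
/-!
If `C_R ≤ C_N` or `C_L ≤ C_N`, the gadget weights are `C_R` and `C_L`, and their sum dominates
`C_N` because `C_N` sums the same terms with the `k`-th one left out. Otherwise `C_N` is below the
possibly infinite `C_R`, hence finite, and it is split into its ceiling and floor halves, each at
most `C_N`, hence below both `C_R` and `C_L`.
-/

theorem Finset.sum_erase_add_le_sum_add_sum {ι M : Type*} [AddCommMonoid M] [PartialOrder M]
    [CanonicallyOrderedAdd M] [IsOrderedAddMonoid M] [DecidableEq ι]
    (s : Finset ι) (k : ι) (f g : ι → M) :
    ∑ i ∈ s.erase k, (f i + g i) ≤ ∑ i ∈ s, f i + ∑ i ∈ s, g i := by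
  rw [← Finset.sum_add_distrib]
  exact Finset.sum_le_sum_of_subset (Finset.erase_subset k s)

namespace ENat

theorem coe_toNat_add_one_div_two_le (n : ℕ∞) : (((n.toNat + 1) / 2 : ℕ) : ℕ∞) ≤ n := by
  cases n with
  | top => simp
  | coe m => exact Nat.cast_le.mpr (by simp only [toNat_natCast]; omega)

theorem coe_toNat_div_two_le (n : ℕ∞) : ((n.toNat / 2 : ℕ) : ℕ∞) ≤ n := by
  cases n with
  | top => simp
  | coe m => exact Nat.cast_le.mpr (by simp only [toNat_natCast]; omega)

theorem coe_toNat_add_one_div_two_add_coe_toNat_div_two {n : ℕ∞} (hn : n ≠ ⊤) :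
    (((n.toNat + 1) / 2 : ℕ) : ℕ∞) + ((n.toNat / 2 : ℕ) : ℕ∞) = n := by
  lift n to ℕ using hn
  rw [← Nat.cast_add, toNat_natCast]
  congr 1
  omega

end ENat

open scoped Classical in
theorem path_gadget_weight_bounds_general
    {V : Type*}
    (h : ℕ) (p : ℕ → V)
    (wbar : V → V → ℕ∞)
    (k : ℕ)
    (CR CL CN : ℕ∞)
    (hCR : CR = ∑ i ∈ Finset.Icc 1 (h - 1), wbar (p i) (p (i + 1)))
    (hCL : CL = ∑ i ∈ Finset.Icc 1 (h - 1), wbar (p (i + 1)) (p i))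
    (hCN : CN = ∑ i ∈ (Finset.Icc 1 (h - 1)).erase k,
      (wbar (p i) (p (i + 1)) + wbar (p (i + 1)) (p i)))
    (w12 w21 : ℕ∞)
    (hw12 : w12 = if CR ≤ CN ∨ CL ≤ CN then CR else (((CN.toNat + 1) / 2 : ℕ) : ℕ∞))
    (hw21 : w21 = if CR ≤ CN ∨ CL ≤ CN then CL else ((CN.toNat / 2 : ℕ) : ℕ∞)) :
    w12 ≤ CR ∧ w21 ≤ CL ∧ CN ≤ w12 + w21 := by
  by_cases hc : CR ≤ CN ∨ CL ≤ CN
  · rw [hw12, hw21, if_pos hc, if_pos hc]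
    refine ⟨le_rfl, le_rfl, ?_⟩
    rw [hCN, hCR, hCL]
    exact Finset.sum_erase_add_le_sum_add_sum _ _ _ _
  · rw [hw12, hw21, if_neg hc, if_neg hc]
    rw [not_or, not_le, not_le] at hc
    obtain ⟨hCR_gt, hCL_gt⟩ := hc
    exact ⟨(ENat.coe_toNat_add_one_div_two_le CN).trans hCR_gt.le,
      (ENat.coe_toNat_div_two_le CN).trans hCL_gt.le,
      (ENat.coe_toNat_add_one_div_two_add_coe_toNat_div_two hCR_gt.ne_top).ge⟩

open scoped Classical in
/-- Let `P = (v_0, …, v_{h+1})` be a maximal induced path of a digraph `G` with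
extended arc weights `w̄` (`w̄(xy) = w(xy)` if `xy ∈ A(G)`, else `∞`), and let
`C_R`, `C_L`, `C_N` (with `k` a maximizer of `w̄(v_i v_{i+1}) + w̄(v_{i+1} v_i)`
over `i ∈ [h−1]`) and the path-gadget weights `w(a_1 b_2)`, `w(a_2 b_1)` be defined
as in the gadget construction. Then `w(a_1 b_2) ≤ C_R`, `w(a_2 b_1) ≤ C_L`, and
`w(a_1 b_2) + w(a_2 b_1) ≥ C_N`. -/
theorem path_gadget_weight_bounds
    {V : Type*} [Fintype V] (A : V → V → Prop) (w : V → V → ℕ)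
    (h : ℕ) (hh : 2 ≤ h) (p : ℕ → V)
    (hinj : ∀ i j, i ≤ h + 1 → j ≤ h + 1 → p i = p j → i = j)
    (hpath : ∀ i ≤ h, A (p i) (p (i + 1)) ∨ A (p (i + 1)) (p i))
    (hd0 : 3 ≤ underlyingDegree A (p 0))
    (hdlast : 3 ≤ underlyingDegree A (p (h + 1)))
    (hdin : ∀ i, 1 ≤ i → i ≤ h → underlyingDegree A (p i) = 2)
    (wbar : V → V → ℕ∞)
    (hwbar : ∀ x y, wbar x y = if A x y then (w x y : ℕ∞) else ⊤)
    (k : ℕ) (hk1 : 1 ≤ k) (hk2 : k ≤ h - 1)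
    (hkmax : ∀ i, 1 ≤ i → i ≤ h - 1 →
      wbar (p i) (p (i + 1)) + wbar (p (i + 1)) (p i) ≤
        wbar (p k) (p (k + 1)) + wbar (p (k + 1)) (p k))
    (CR CL CN : ℕ∞)
    (hCR : CR = ∑ i ∈ Finset.Icc 1 (h - 1), wbar (p i) (p (i + 1)))
    (hCL : CL = ∑ i ∈ Finset.Icc 1 (h - 1), wbar (p (i + 1)) (p i))
    (hCN : CN = ∑ i ∈ (Finset.Icc 1 (h - 1)).erase k,
      (wbar (p i) (p (i + 1)) + wbar (p (i + 1)) (p i)))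
    (w12 w21 : ℕ∞)
    (hw12 : w12 = if CR ≤ CN ∨ CL ≤ CN then CR else (((CN.toNat + 1) / 2 : ℕ) : ℕ∞))
    (hw21 : w21 = if CR ≤ CN ∨ CL ≤ CN then CL else ((CN.toNat / 2 : ℕ) : ℕ∞)) :
    w12 ≤ CR ∧ w21 ≤ CL ∧ CN ≤ w12 + w21 :=
  path_gadget_weight_bounds_general h p wbar k CR CL CN hCR hCL hCN w12 w21 hw12 hw21
end

section
/- Let G be a finite undirected graph in which every vertex has degree at least 2, and let g be the feedback edge number of G. Then G contains at most 2g − 2 vertices of degree at least 3. -/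
/-!
By the handshake lemma, `2|E| = ∑ deg v ≥ 2|V| + #{v | deg v ≥ 3}` when every degree is at least 2,
so `#{v | deg v ≥ 3} ≤ 2(|E| - |V|) = 2(g - c) ≤ 2g - 2`, as a nonempty graph has `c ≥ 1` components.
-/

theorem Finset.mul_card_add_card_filter_le_sum {ι : Type*} (s : Finset ι) (f : ι → ℕ) (k : ℕ)
    (hf : ∀ i ∈ s, k ≤ f i) :
    k * s.card + (s.filter fun i => k + 1 ≤ f i).card ≤ ∑ i ∈ s, f i := by
  calc k * s.card + (s.filter fun i => k + 1 ≤ f i).card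
      = ∑ i ∈ s, (k + if k + 1 ≤ f i then 1 else 0) := by
        rw [Finset.sum_add_distrib, Finset.sum_const, Finset.sum_boole, smul_eq_mul, mul_comm,
          Nat.cast_id]
    _ ≤ ∑ i ∈ s, f i := Finset.sum_le_sum fun i hi => by
        have := hf i hi
        split_ifs <;> omega

namespace SimpleGraph

theorem two_mul_card_add_card_three_le_degree_le_two_mul_card_edgeFinset {V : Type*} [Fintype V]
    [DecidableEq V] (G : SimpleGraph V) [DecidableRel G.Adj] (hdeg : ∀ v, 2 ≤ G.degree v) :
    2 * Fintype.card V + (Finset.univ.filter fun v => 3 ≤ G.degree v).card ≤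
      2 * G.edgeFinset.card := by
  rw [← G.sum_degrees_eq_twice_card_edges]
  exact Finset.mul_card_add_card_filter_le_sum _ _ 2 fun v _ => hdeg v

end SimpleGraph

/-- Let `G` be a finite undirected graph in which every vertex has degree at
least 2, and let `g` be its feedback edge number (characterized by
`g = |E(G)| − |V(G)| + c` with `c` the number of connected components, stated here
in subtraction-free form). Then `G` contains at most `2g − 2` vertices of degree
at least 3. -/
theorem few_high_degree_vertices_of_feedback_edge_number
    {V : Type*} [Fintype V] [DecidableEq V]
    (G : SimpleGraph V) [DecidableRel G.Adj]
    (hdeg : ∀ v : V, 2 ≤ G.degree v)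
    (g : ℕ)
    (hg : g + Fintype.card V = G.edgeFinset.card + Nat.card G.ConnectedComponent) :
    (Finset.univ.filter fun v : V => 3 ≤ G.degree v).card ≤ 2 * g - 2 := by
  rcases isEmpty_or_nonempty V with _ | _
  · simp
  · have hhandshake := G.two_mul_card_add_card_three_le_degree_le_two_mul_card_edgeFinset hdeg
    have hcomponents : 0 < Nat.card G.ConnectedComponent := Nat.card_pos
    omega
end

section
/- Let G be a finite connected undirected graph in which every vertex has degree at least 2, and let g ≥ 2 be the feedback edge number of G. Then G contains at most 3g − 3 maximal induced paths, where an edge between two vertices of degree at least 3 counts as a maximal induced path with no inner vertex. -/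
/-- `IsMaxIndPath G a b l` states that `(a, l_1, …, l_h, b)` is a maximal induced
path of the undirected graph `G`: a path in `G` whose endpoints `a`, `b` have
degree at least 3 and whose inner vertices (the entries of `l`) have degree
exactly 2. -/
def IsMaxIndPath {V : Type*} [Fintype V] (G : SimpleGraph V) [DecidableRel G.Adj]
    (a b : V) (l : List V) : Prop :=
  (a :: (l ++ [b])).Chain' G.Adj ∧ (a :: (l ++ [b])).Nodup ∧
    3 ≤ G.degree a ∧ 3 ≤ G.degree b ∧ ∀ v ∈ l, G.degree v = 2

/-!
Orient every maximal induced path. Its inner vertices have degree 2, so it is determined by its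
first dart, which leaves a vertex of degree at least 3; and each path has two orientations.
Hence twice the number of paths is at most the sum of the degrees that are at least 3. Since the
remaining vertices have degree exactly 2, the handshake lemma bounds that sum by
`6 (|E| - |V|) = 6 (g - 1)`.
-/

open Finset

theorem Finset.two_mul_card_image_pair {α : Type*} [DecidableEq α] {s : Finset α} {r : α → α}
    (hr : Function.Involutive r) (hs : ∀ x ∈ s, r x ∈ s) (hne : ∀ x ∈ s, r x ≠ x) :
    2 * #(s.image fun x => ({x, r x} : Finset α)) = #s := by
  rw [card_eq_sum_card_image (fun x => ({x, r x} : Finset α)) s, mul_comm, ← smul_eq_mul,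
    ← sum_const]
  refine (sum_congr rfl fun p hp => ?_).symm
  obtain ⟨x, hx, rfl⟩ := mem_image.mp hp
  have hfiber : {y ∈ s | ({y, r y} : Finset α) = {x, r x}} = {x, r x} := by
    ext y
    simp only [mem_filter, mem_insert, mem_singleton]
    constructor
    · rintro ⟨-, hy⟩
      simpa [hy] using (mem_insert_self y {r y} : y ∈ ({y, r y} : Finset α))
    · rintro (rfl | rfl)
      · exact ⟨hx, rfl⟩
      · exact ⟨hs x hx, by rw [hr x, pair_comm]⟩
  rw [hfiber, card_pair (hne x hx).symm]

theorem Set.two_mul_ncard_image_pair {α : Type*} [DecidableEq α] {s : Set α} {r : α → α}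
    (hfin : s.Finite) (hr : Function.Involutive r) (hs : ∀ x ∈ s, r x ∈ s)
    (hne : ∀ x ∈ s, r x ≠ x) :
    2 * ((fun x => ({x, r x} : Finset α)) '' s).ncard = s.ncard := by
  obtain ⟨s, rfl⟩ := hfin.exists_finset_coe
  rw [← coe_image, Set.ncard_coe_finset, Set.ncard_coe_finset]
  exact Finset.two_mul_card_image_pair hr hs hne

namespace SimpleGraph

theorem Connected.card_connectedComponent {V : Type*} {G : SimpleGraph V} (hconn : G.Connected) :
    Nat.card G.ConnectedComponent = 1 :=
  Nat.card_eq_one_iff_unique.mpr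
    ⟨hconn.preconnected.subsingleton_connectedComponent, hconn.nonempty.map G.connectedComponentMk⟩

variable {V : Type*} [Fintype V] {G : SimpleGraph V} [DecidableRel G.Adj]

theorem eq_of_adj_of_degree_eq_two {x a c c' : V} (hx : G.degree x = 2) (ha : G.Adj x a)
    (hc : G.Adj x c) (hc' : G.Adj x c') (hca : c ≠ a) (hca' : c' ≠ a) : c = c' := by
  classical
  by_contra hne
  have hsub : ({a, c, c'} : Finset V) ⊆ G.neighborFinset x := by
    simp [insert_subset_iff, ha, hc, hc']
  have hcard : #({a, c, c'} : Finset V) = 3 :=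
    card_eq_three.mpr ⟨a, c, c', hca.symm, hca'.symm, hne, rfl⟩
  have := card_le_card hsub
  rw [hcard, card_neighborFinset_eq_degree, hx] at this
  omega

theorem eq_of_isChain_of_degree_eq_two {a b b' : V} {l l' : List V}
    (hc : (a :: (l ++ [b])).IsChain G.Adj) (hn : (a :: (l ++ [b])).Nodup)
    (hc' : (a :: (l' ++ [b'])).IsChain G.Adj) (hn' : (a :: (l' ++ [b'])).Nodup)
    (hb : 3 ≤ G.degree b) (hb' : 3 ≤ G.degree b')
    (hl : ∀ v ∈ l, G.degree v = 2) (hl' : ∀ v ∈ l', G.degree v = 2)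
    (hhead : (l ++ [b]).head? = (l' ++ [b']).head?) : l ++ [b] = l' ++ [b'] := by
  induction l generalizing a l' with
  | nil =>
    cases l' with
    | nil => simpa using hhead
    | cons x' t' =>
      simp only [List.nil_append, List.cons_append, List.head?_cons, Option.some.injEq] at hhead
      subst hhead
      have := hl' b List.mem_cons_self
      omega
  | cons x t ih =>
    cases l' with
    | nil =>
      simp only [List.nil_append, List.cons_append, List.head?_cons, Option.some.injEq] at hhead
      subst hhead
      have := hl x List.mem_cons_self
      omega
    | cons x' t' =>
      simp only [List.cons_append, List.head?_cons, Option.some.injEq] at hhead ⊢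
      subst hhead
      obtain ⟨c, r, hcr⟩ := List.exists_cons_of_ne_nil (List.concat_ne_nil b t)
      obtain ⟨c', r', hcr'⟩ := List.exists_cons_of_ne_nil (List.concat_ne_nil b' t')
      simp only [List.cons_append, hcr, hcr'] at hc hn hc' hn'
      have hcc' : c = c' := by
        simp only [List.isChain_cons_cons, List.nodup_cons, List.mem_cons, not_or] at hc hc' hn hn'
        exact eq_of_adj_of_degree_eq_two (hl x List.mem_cons_self) hc.1.symm hc.2.1 hc'.2.1
          (Ne.symm hn.1.2.1) (Ne.symm hn'.1.2.1)
      rw [ih (hcr ▸ hc.tail) (hcr ▸ (List.nodup_cons.mp hn).2) (hcr' ▸ hc'.tail)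
        (hcr' ▸ (List.nodup_cons.mp hn').2) (fun v hv => hl v (List.mem_cons_of_mem x hv))
        (fun v hv => hl' v (List.mem_cons_of_mem x hv)) (by simp [hcr, hcr', hcc'])]

theorem card_filter_dart_fst [DecidableEq V] (p : V → Prop) [DecidablePred p] :
    #{d : G.Dart | p d.fst} = ∑ v with p v, G.degree v := by
  rw [card_eq_sum_card_fiberwise (f := fun d : G.Dart => d.fst) (t := {v | p v})
    (fun d hd => by simpa using hd)]
  refine sum_congr rfl fun v hv => ?_
  rw [← G.dart_fst_fiber_card_eq_degree v, filter_filter]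
  congr 1
  ext d
  simp only [mem_filter, mem_univ, true_and] at hv ⊢
  exact ⟨And.right, fun h => ⟨h ▸ hv, h⟩⟩

theorem sum_degree_filter_three_le_add_six_mul_card_le (hdeg : ∀ v, 2 ≤ G.degree v) :
    ∑ v with 3 ≤ G.degree v, G.degree v + 6 * Fintype.card V ≤ 6 * #G.edgeFinset := by
  classical
  have hsplit := sum_filter_add_sum_filter_not univ (fun v => 3 ≤ G.degree v)
    (fun v => G.degree v)
  have hsmall : ∑ v with ¬3 ≤ G.degree v, G.degree v = 2 * #{v | ¬3 ≤ G.degree v} := by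
    rw [mul_comm, ← smul_eq_mul, ← sum_const]
    exact sum_congr rfl fun v hv => by have := (mem_filter.mp hv).2; have := hdeg v; omega
  have hlarge : #{v | 3 ≤ G.degree v} • 3 ≤ ∑ v with 3 ≤ G.degree v, G.degree v :=
    card_nsmul_le_sum _ _ _ fun v hv => (mem_filter.mp hv).2
  rw [smul_eq_mul] at hlarge
  have hcard := card_filter_add_card_filter_not (s := univ) (fun v => 3 ≤ G.degree v)
  rw [card_univ] at hcard
  have hhandshake := G.sum_degrees_eq_twice_card_edges
  omega

end SimpleGraph

section MaxIndPath

variable {V : Type*} [Fintype V] {G : SimpleGraph V} [DecidableRel G.Adj]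

theorem IsMaxIndPath.reverse {a b : V} {l : List V} (h : IsMaxIndPath G a b l) :
    IsMaxIndPath G b a l.reverse := by
  obtain ⟨hc, hn, ha, hb, hl⟩ := h
  have hrev : b :: (l.reverse ++ [a]) = (a :: (l ++ [b])).reverse := by simp
  refine ⟨?_, ?_, hb, ha, fun v hv => hl v (List.mem_reverse.mp hv)⟩
  · rw [hrev]
    exact List.isChain_reverse.mpr (List.IsChain.imp (fun _ _ h => h.symm) hc)
  · rw [hrev]
    exact List.nodup_reverse.mpr hn

variable (G) in
def maxIndPathLists : Set (List V) :=
  {L | ∃ a b l, IsMaxIndPath G a b l ∧ L = a :: (l ++ [b])}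

theorem reverse_mem_maxIndPathLists {L : List V} (hL : L ∈ maxIndPathLists G) :
    L.reverse ∈ maxIndPathLists G := by
  obtain ⟨a, b, l, h, rfl⟩ := hL
  exact ⟨b, a, l.reverse, IsMaxIndPath.reverse h, by simp⟩

theorem reverse_ne_of_mem_maxIndPathLists {L : List V} (hL : L ∈ maxIndPathLists G) :
    L.reverse ≠ L := by
  obtain ⟨a, b, l, h, rfl⟩ := hL
  have hab : a ≠ b := fun hab => (List.nodup_cons.mp h.2.1).1 (by simp [hab])
  simp [Ne.symm hab]

theorem injOn_take_two_maxIndPathLists : Set.InjOn (List.take 2) (maxIndPathLists G) := by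
  rintro _ ⟨a, b, l, h, rfl⟩ _ ⟨a', b', l', h', rfl⟩ htake
  have hhead : (l ++ [b]).head? = (l' ++ [b']).head? := by
    simpa [List.head?_take] using congrArg (fun L => L.tail.head?) htake
  obtain rfl : a = a' := by simpa using congrArg List.head? htake
  rw [SimpleGraph.eq_of_isChain_of_degree_eq_two h.1 h.2.1 h'.1 h'.2.1 h.2.2.2.1 h'.2.2.2.1
    h.2.2.2.2 h'.2.2.2.2 hhead]

theorem take_two_mem_of_mem_maxIndPathLists [DecidableEq V] {L : List V}
    (hL : L ∈ maxIndPathLists G) :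
    L.take 2 ∈ ({d : G.Dart | 3 ≤ G.degree d.fst} : Finset G.Dart).image
      fun d => [d.fst, d.snd] := by
  obtain ⟨a, b, l, h, rfl⟩ := hL
  obtain ⟨c, r, hcr⟩ := List.exists_cons_of_ne_nil (List.concat_ne_nil b l)
  have hac : G.Adj a c := by
    have hc := h.1
    rw [hcr] at hc
    exact hc.rel
  exact mem_image.mpr ⟨⟨(a, c), hac⟩, by simpa using h.2.2.1, by simp [hcr]⟩

theorem maxIndPathLists_finite : (maxIndPathLists G).Finite := by
  classical
  exact Set.Finite.of_injOn (fun _ => take_two_mem_of_mem_maxIndPathLists)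
    injOn_take_two_maxIndPathLists (finite_toSet _)

theorem ncard_maxIndPathLists_le [DecidableEq V] :
    (maxIndPathLists G).ncard ≤ ∑ v with 3 ≤ G.degree v, G.degree v := by
  rw [← SimpleGraph.card_filter_dart_fst, ← Set.ncard_coe_finset]
  refine (Set.ncard_le_ncard_of_injOn _ (fun L hL => take_two_mem_of_mem_maxIndPathLists hL)
    injOn_take_two_maxIndPathLists).trans ?_
  rw [Set.ncard_coe_finset, Set.ncard_coe_finset]
  exact card_image_le

theorem ncard_maxIndPaths_add_three_mul_card_le [DecidableEq V] (hdeg : ∀ v, 2 ≤ G.degree v) :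
    Set.ncard { s : Finset (List V) | ∃ a b l, IsMaxIndPath G a b l ∧
      s = {a :: (l ++ [b]), b :: (l.reverse ++ [a])} } + 3 * Fintype.card V ≤
      3 * #G.edgeFinset := by
  have hpaths : { s : Finset (List V) | ∃ a b l, IsMaxIndPath G a b l ∧
      s = {a :: (l ++ [b]), b :: (l.reverse ++ [a])} } =
      (fun L => {L, L.reverse}) '' maxIndPathLists G := by
    ext s
    simp [maxIndPathLists, eq_comm]
  have hpair := Set.two_mul_ncard_image_pair (maxIndPathLists_finite (G := G))
    List.reverse_involutive (fun _ => reverse_mem_maxIndPathLists)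
    (fun _ => reverse_ne_of_mem_maxIndPathLists)
  have hlists := ncard_maxIndPathLists_le (G := G)
  have hdegsum := SimpleGraph.sum_degree_filter_three_le_add_six_mul_card_le hdeg
  rw [hpaths]
  omega

end MaxIndPath

theorem few_maximal_induced_paths_of_feedback_edge_number_general
    {V : Type*} [Fintype V] [DecidableEq V]
    (G : SimpleGraph V) [DecidableRel G.Adj]
    (hconn : G.Connected)
    (hdeg : ∀ v : V, 2 ≤ G.degree v)
    (g : ℕ)
    (hg : g + Fintype.card V = G.edgeFinset.card + Nat.card G.ConnectedComponent) :
    Set.ncard { s : Finset (List V) | ∃ a b l, IsMaxIndPath G a b l ∧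
      s = {a :: (l ++ [b]), b :: (l.reverse ++ [a])} } ≤ 3 * g - 3 := by
  have hpaths := ncard_maxIndPaths_add_three_mul_card_le (G := G) hdeg
  rw [hconn.card_connectedComponent] at hg
  omega

/-- Let `G` be a finite connected undirected graph with minimum degree at least 2
and feedback edge number `g ≥ 2` (characterized by `g = |E(G)| − |V(G)| + c`,
stated in subtraction-free form). Then `G` contains at most `3g − 3` maximal
induced paths; a maximal induced path and its reversal are counted once, by
counting the unordered pairs `{path, reversed path}` of vertex sequences. -/
theorem few_maximal_induced_paths_of_feedback_edge_number
    {V : Type*} [Fintype V] [DecidableEq V]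
    (G : SimpleGraph V) [DecidableRel G.Adj]
    (hconn : G.Connected)
    (hdeg : ∀ v : V, 2 ≤ G.degree v)
    (g : ℕ) (hg2 : 2 ≤ g)
    (hg : g + Fintype.card V = G.edgeFinset.card + Nat.card G.ConnectedComponent) :
    Set.ncard { s : Finset (List V) | ∃ a b l, IsMaxIndPath G a b l ∧
      s = {a :: (l ++ [b]), b :: (l.reverse ++ [a])} } ≤ 3 * g - 3 :=
  few_maximal_induced_paths_of_feedback_edge_number_general G hconn hdeg g hg
end

section
/- Let (U, 𝓕, ℓ) be a Set Cover instance with U a finite set, 𝓕 a nonempty finite family of subsets of U, and ℓ ∈ ℕ. Let G be the directed graph with vertex set {s, t} ∪ {v_u : u ∈ U} ∪ {v_S : S ∈ 𝓕} and arcs: ts of weight 0; for every S ∈ 𝓕, arcs s v_S and v_S t of weight 0; for every u ∈ U, an arc v_u t of weight 0; and for every S ∈ 𝓕 and every u ∈ S, an arc v_S v_u of weight 1. Then there exists a subfamily 𝓕' ⊆ 𝓕 with |𝓕'| ≤ ℓ and ⋃_{S ∈ 𝓕'} S = U if and only if there exists a strongly connected spanning subgraph H of G with cost Σ_{v ∈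 V(G)} max_{vx ∈ A(H)} w(vx) at most ℓ. -/
/-- The vertex set of the graph constructed from a Set Cover instance:
`Sum.inl (Sum.inl ())` is `s`, `Sum.inl (Sum.inr ())` is `t`,
`Sum.inr (Sum.inl u)` is `v_u` for `u ∈ U`, and `Sum.inr (Sum.inr S)` is `v_S`
for `S ∈ 𝓕`. -/
abbrev SetCoverVertex (U : Type*) (𝓕 : Finset (Finset U)) : Type _ :=
  (Unit ⊕ Unit) ⊕ (U ⊕ {S : Finset U // S ∈ 𝓕})

/-- The arcs of the graph constructed from a Set Cover instance: `ts`; `s v_S` and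
`v_S t` for every `S ∈ 𝓕`; `v_u t` for every `u ∈ U`; and `v_S v_u` for every
`S ∈ 𝓕` and `u ∈ S`. -/
def SetCoverArc {U : Type*} (𝓕 : Finset (Finset U)) :
    SetCoverVertex U 𝓕 → SetCoverVertex U 𝓕 → Prop
  | Sum.inl (Sum.inr _), Sum.inl (Sum.inl _) => True          -- t → s
  | Sum.inl (Sum.inl _), Sum.inr (Sum.inr _) => True          -- s → v_S
  | Sum.inr (Sum.inr _), Sum.inl (Sum.inr _) => True          -- v_S → t
  | Sum.inr (Sum.inl _), Sum.inl (Sum.inr _) => True          -- v_u → t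
  | Sum.inr (Sum.inr S), Sum.inr (Sum.inl u) => u ∈ S.1       -- v_S → v_u
  | _, _ => False

/-- The arc weights of the graph constructed from a Set Cover instance: the arcs
`v_S v_u` have weight 1 and all other arcs have weight 0. -/
def SetCoverWeight {U : Type*} (𝓕 : Finset (Finset U)) :
    SetCoverVertex U 𝓕 → SetCoverVertex U 𝓕 → ℕ
  | Sum.inr (Sum.inr _), Sum.inr (Sum.inl _) => 1
  | _, _ => 0

/-!
A set vertex `v_S` pays 1 exactly when the subgraph uses one of its arcs `v_S v_u`, and every
other vertex pays 0, so the cost of any subgraph is the number of set vertices it leaves through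
an element arc. Given a cover `𝓕'`, keep every arc of weight 0 together with the arcs
`v_S v_u` for `S ∈ 𝓕'`: every vertex reaches `t` (`s` through any `v_S`), and `t` reaches `v_u`
along `t s v_S v_u` for a set `S ∈ 𝓕'` containing `u`. Conversely, in a
strongly connected subgraph the last arc of a path from `t` to `v_u` must be some `v_S v_u`, so
the sets left through an element arc cover `U`.
-/

open Finset Relation

section VertexCost

variable {V : Type*} [Fintype V] {B : V → V → Prop} {w : V → V → ℕ} {v : V}

theorem le_vertexCost {y : V} (hB : B v y) : w v y ≤ vertexCost B w v := by
  classical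
  unfold vertexCost
  simpa [hB] using le_sup (f := fun u => if B v u then w v u else 0) (mem_univ y)

theorem vertexCost_le {c : ℕ} (h : ∀ y, B v y → w v y ≤ c) : vertexCost B w v ≤ c := by
  classical
  refine Finset.sup_le fun y _ => ?_
  split_ifs with hB
  exacts [h y hB, Nat.zero_le c]

end VertexCost

theorem StronglyConnected.of_hub {V : Type*} {A : V → V → Prop} (c : V)
    (h_to : ∀ x, ReflTransGen A x c) (h_from : ∀ y, ReflTransGen A c y) :
    StronglyConnected A :=
  fun x y => (h_to x).trans (h_from y)

namespace SetCoverVertex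

variable {U : Type*} {𝓕 : Finset (Finset U)}

abbrev s : SetCoverVertex U 𝓕 := .inl (.inl ())

abbrev t : SetCoverVertex U 𝓕 := .inl (.inr ())

abbrev ofElem (u : U) : SetCoverVertex U 𝓕 := .inr (.inl u)

abbrev ofSet (S : {S : Finset U // S ∈ 𝓕}) : SetCoverVertex U 𝓕 := .inr (.inr S)

end SetCoverVertex

open SetCoverVertex

section Reduction

variable {U : Type*} {𝓕 : Finset (Finset U)}

theorem exists_eq_ofSet_of_setCoverArc_ofElem {x : SetCoverVertex U 𝓕} {u : U}
    (h : SetCoverArc 𝓕 x (ofElem u)) : ∃ S, x = ofSet S ∧ u ∈ S.1 := by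
  rcases x with (_ | _) | (_ | S)
  iterate 3 exact h.elim
  exact ⟨S, rfl, h⟩

theorem setCoverWeight_le_one (x y : SetCoverVertex U 𝓕) : SetCoverWeight 𝓕 x y ≤ 1 := by
  rcases x with (_ | _) | (_ | _) <;> rcases y with (_ | _) | (_ | _) <;> simp [SetCoverWeight]

theorem setCoverWeight_eq_zero {x : SetCoverVertex U 𝓕} (hx : ∀ S, x ≠ ofSet S)
    (y : SetCoverVertex U 𝓕) : SetCoverWeight 𝓕 x y = 0 := by
  rcases x with (_ | _) | (_ | S)
  iterate 3 rcases y with (_ | _) | (_ | _) <;> rfl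
  exact (hx S rfl).elim

open scoped Classical in
noncomputable def usedSets (B : SetCoverVertex U 𝓕 → SetCoverVertex U 𝓕 → Prop) :
    Finset {S : Finset U // S ∈ 𝓕} :=
  {S | ∃ u, B (ofSet S) (ofElem u)}

theorem mem_usedSets {B : SetCoverVertex U 𝓕 → SetCoverVertex U 𝓕 → Prop} {S} :
    S ∈ usedSets B ↔ ∃ u, B (ofSet S) (ofElem u) := by
  classical
  simp [usedSets]

def coverArc (𝓕' : Finset (Finset U)) : SetCoverVertex U 𝓕 → SetCoverVertex U 𝓕 → Prop
  | .inr (.inr S), .inr (.inl u) => u ∈ S.1 ∧ S.1 ∈ 𝓕'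
  | x, y => SetCoverArc 𝓕 x y

variable {𝓕' : Finset (Finset U)}

theorem setCoverArc_of_coverArc {x y : SetCoverVertex U 𝓕} (h : coverArc 𝓕' x y) :
    SetCoverArc 𝓕 x y := by
  rcases x with (_ | _) | (_ | _) <;> rcases y with (_ | _) | (_ | _) <;>
    first | exact h | exact h.1

theorem card_usedSets_coverArc_le : #(usedSets (coverArc (𝓕 := 𝓕) 𝓕')) ≤ #𝓕' :=
  card_le_card_of_injOn Subtype.val
    (fun S hS => by obtain ⟨_, -, hS'⟩ := mem_usedSets.1 hS; exact hS')
    (fun _ _ _ _ => Subtype.ext)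

theorem stronglyConnected_coverArc (h𝓕 : 𝓕.Nonempty) (h𝓕' : 𝓕' ⊆ 𝓕)
    (hcov : ∀ u, ∃ S ∈ 𝓕', u ∈ S) : StronglyConnected (coverArc (𝓕 := 𝓕) 𝓕') := by
  obtain ⟨S₀, hS₀⟩ := h𝓕
  have ofSet_to_t (S : 𝓕) : ReflTransGen (coverArc (𝓕 := 𝓕) 𝓕') (ofSet S) t :=
    .single trivial
  have t_to_ofSet (S : 𝓕) : ReflTransGen (coverArc (𝓕 := 𝓕) 𝓕') t (ofSet S) :=
    .tail (.single (b := s) trivial) trivial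
  refine .of_hub t (fun x => ?_) (fun y => ?_)
  · rcases x with (_ | _) | (_ | S)
    · exact .head (b := ofSet ⟨S₀, hS₀⟩) trivial (ofSet_to_t _)
    · exact .refl
    · exact .single trivial
    · exact ofSet_to_t S
  · rcases y with (_ | _) | (u | S)
    · exact .single trivial
    · exact .refl
    · obtain ⟨S, hS, hu⟩ := hcov u
      exact (t_to_ofSet ⟨S, h𝓕' hS⟩).tail (c := ofElem u) ⟨hu, hS⟩
    · exact t_to_ofSet S

theorem exists_mem_usedSets_of_stronglyConnected
    {B : SetCoverVertex U 𝓕 → SetCoverVertex U 𝓕 → Prop}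
    (hB : ∀ x y, B x y → SetCoverArc 𝓕 x y) (hsc : StronglyConnected B) (u : U) :
    ∃ S ∈ usedSets B, u ∈ S.1 := by
  rcases (hsc t (ofElem u)).cases_tail with h | ⟨x, -, hx⟩
  · exact absurd h (by simp)
  · obtain ⟨S, rfl, hu⟩ := exists_eq_ofSet_of_setCoverArc_ofElem (hB _ _ hx)
    exact ⟨S, mem_usedSets.2 ⟨u, hx⟩, hu⟩

section Cost

variable [Fintype U]

open scoped Classical in
theorem vertexCost_setCoverWeight_ofSet
    (B : SetCoverVertex U 𝓕 → SetCoverVertex U 𝓕 → Prop)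
    (S : {S : Finset U // S ∈ 𝓕}) :
    vertexCost B (SetCoverWeight 𝓕) (ofSet S) = if S ∈ usedSets B then 1 else 0 := by
  split_ifs with hS
  · obtain ⟨u, hu⟩ := mem_usedSets.1 hS
    exact le_antisymm (vertexCost_le fun y _ => setCoverWeight_le_one _ y)
      (le_vertexCost (w := SetCoverWeight 𝓕) hu)
  · refine Nat.le_zero.1 (vertexCost_le fun y hy => ?_)
    rcases y with (_ | _) | (u | _)
    · exact le_rfl
    · exact le_rfl
    · exact (hS (mem_usedSets.2 ⟨u, hy⟩)).elim
    · exact le_rfl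

theorem pacCost_setCoverWeight (B : SetCoverVertex U 𝓕 → SetCoverVertex U 𝓕 → Prop) :
    pacCost B (SetCoverWeight 𝓕) = #(usedSets B) := by
  have h_zero (x) (hx : ∀ S, x ≠ ofSet S) : vertexCost B (SetCoverWeight 𝓕) x = 0 :=
    Nat.le_zero.1 (vertexCost_le fun y _ => (setCoverWeight_eq_zero hx y).le)
  simp only [pacCost, Fintype.sum_sum_type, vertexCost_setCoverWeight_ofSet, sum_boole,
    filter_univ_mem]
  simp [h_zero]

end Cost

end Reduction

theorem setCover_reduction_correct_general
    {U : Type*} [Fintype U]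
    (𝓕 : Finset (Finset U)) (h𝓕 : 𝓕.Nonempty) (ℓ : ℕ) :
    (∃ 𝓕' ⊆ 𝓕, 𝓕'.card ≤ ℓ ∧ ∀ u : U, ∃ S ∈ 𝓕', u ∈ S) ↔
    (∃ B : SetCoverVertex U 𝓕 → SetCoverVertex U 𝓕 → Prop,
      (∀ x y, B x y → SetCoverArc 𝓕 x y) ∧ StronglyConnected B ∧
      pacCost B (SetCoverWeight 𝓕) ≤ ℓ) := by
  constructor
  · rintro ⟨𝓕', h𝓕', hcard, hcov⟩
    exact ⟨coverArc 𝓕', fun _ _ => setCoverArc_of_coverArc,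
      stronglyConnected_coverArc h𝓕 h𝓕' hcov,
      (pacCost_setCoverWeight _).trans_le (card_usedSets_coverArc_le.trans hcard)⟩
  · rintro ⟨B, hB, hsc, hcost⟩
    refine ⟨(usedSets B).map (.subtype _), fun S hS => ?_, ?_, fun u => ?_⟩
    · obtain ⟨S, -, rfl⟩ := mem_map.1 hS
      exact S.2
    · rw [card_map, ← pacCost_setCoverWeight]
      exact hcost
    · obtain ⟨S, hS, hu⟩ := exists_mem_usedSets_of_stronglyConnected hB hsc u
      exact ⟨S.1, mem_map_of_mem _ hS, hu⟩

/-- Correctness of the reduction from Set Cover to PAC: the Set Cover instance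
`(U, 𝓕, ℓ)` has a set cover of size at most `ℓ` iff the constructed graph has a
strongly connected spanning subgraph of cost at most `ℓ`. -/
theorem setCover_reduction_correct
    {U : Type*} [Fintype U] [DecidableEq U]
    (𝓕 : Finset (Finset U)) (h𝓕 : 𝓕.Nonempty) (ℓ : ℕ) :
    (∃ 𝓕' ⊆ 𝓕, 𝓕'.card ≤ ℓ ∧ ∀ u : U, ∃ S ∈ 𝓕', u ∈ S) ↔
    (∃ B : SetCoverVertex U 𝓕 → SetCoverVertex U 𝓕 → Prop,
      (∀ x y, B x y → SetCoverArc 𝓕 x y) ∧ StronglyConnected B ∧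
      pacCost B (SetCoverWeight 𝓕) ≤ ℓ) :=
  setCover_reduction_correct_general 𝓕 h𝓕 ℓ
end
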